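/- Every maximal independent set in a sputnik graph is robust: if G is a connected graph in which every vertex lying on a cycle has at least one pendant neighbor, then every maximal independent set of G remains maximal and independent in every connected spanning subgraph of G. -/

import Mathlib

open SimpleGraph

variable {V : Type*}

/-- `S` is an independent set in `G`: no two vertices of `S` are adjacent. -/
def Indep (G : SimpleGraph V) (S : Set V) : Prop :=
  ∀ u ∈ S, ∀ v ∈ S, ¬ G.Adj u v

/-- `M` is a maximal independent set of `G` (maximal for inclusion). -/
def IsMIS (G : SimpleGraph V) (M : Set V) : Prop :=
  Indep G M ∧ ∀ S : Set V, Indep G S → M ⊆ S → S = M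

/-- `M` is robust in `G`: it is a maximal independent set of every
connected spanning subgraph of `G`. -/
def RobustMIS (G : SimpleGraph V) (M : Set V) : Prop :=
  ∀ H : SimpleGraph V, H ≤ G → H.Connected → IsMIS H M

/-- A pendant vertex: a vertex with exactly one neighbor. -/
def Pendant (G : SimpleGraph V) (v : V) : Prop :=
  ∃! w, G.Adj v w

/-- `v` lies on a cycle of `G`. -/
def OnCycle (G : SimpleGraph V) (v : V) : Prop :=
  ∃ p : G.Walk v v, p.IsCycle

/-- `v` has at least one pendant neighbor. -/
def HasPendantNeighbor (G : SimpleGraph V) (v : V) : Prop :=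
  ∃ w, G.Adj v w ∧ Pendant G w

/-- A sputnik graph: every vertex on a cycle has a pendant neighbor. -/
def Sputnik (G : SimpleGraph V) : Prop :=
  ∀ v, OnCycle G v → HasPendantNeighbor G v

/-- `G` is a complete bipartite graph with parts `V1`, `V2`. -/
def IsCompleteBipartiteWith (G : SimpleGraph V) (V1 V2 : Set V) : Prop :=
  (∀ v, v ∈ V1 ↔ v ∉ V2) ∧
    (∀ u v, G.Adj u v ↔ ((u ∈ V1 ∧ v ∈ V2) ∨ (u ∈ V2 ∧ v ∈ V1)))

/-- `G` is a complete bipartite graph. -/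
def IsCompleteBipartite (G : SimpleGraph V) : Prop :=
  ∃ V1 V2 : Set V, IsCompleteBipartiteWith G V1 V2

/-- `G` is biconnected: at least three vertices, and removing any
single vertex leaves it connected. -/
def Biconnected (G : SimpleGraph V) : Prop :=
  3 ≤ Nat.card V ∧ ∀ w : V, (G.induce {v | v ≠ w}).Connected

/-!
Let `H` be a connected spanning subgraph of `G` and `v ∉ M`; it suffices that `v` keeps an
`H`-neighbour in `M`. Take a `G`-neighbour `u ∈ M` of `v`. If the edge `vu` is missing from `H`,
an `H`-path from `v` to `u` closes up with `vu` to a cycle of `G` through `v`, so `v` has a pendant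
neighbour `w`. The pendant edge `vw` is a bridge, hence lies in `H`, and `w ∈ M` because its only
neighbour `v` is not in `M`.
-/

variable {G H : SimpleGraph V} {M S : Set V} {u v w : V}

theorem Indep.mono (hHG : H ≤ G) (hS : Indep G S) : Indep H S :=
  fun a ha b hb hab => hS a ha b hb (hHG hab)

theorem isMIS_iff : IsMIS G M ↔ Indep G M ∧ ∀ v ∉ M, ∃ u ∈ M, G.Adj v u := by
  refine ⟨fun hM => ⟨hM.1, fun v hv => ?_⟩, fun ⟨hMind, hMdom⟩ => ⟨hMind, ?_⟩⟩
  · by_contra! hnadj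
    have hind : Indep G (insert v M) := by
      rintro a (rfl | ha) b (rfl | hb) hab
      · exact G.irrefl hab
      · exact hnadj b hb hab
      · exact hnadj a ha hab.symm
      · exact hM.1 a ha b hb hab
    exact hv (hM.2 _ hind (Set.subset_insert v M) ▸ Set.mem_insert v M)
  · refine fun S hS hMS => Set.Subset.antisymm (fun v hvS => ?_) hMS
    by_contra hv
    obtain ⟨u, hu, hvu⟩ := hMdom v hv
    exact hS v hvS u (hMS hu) hvu

theorem Pendant.adj_of_reachable (hw : Pendant G w) (hwv : G.Adj w v) (hHG : H ≤ G)
    (hr : H.Reachable w v) : H.Adj w v := by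
  obtain ⟨p⟩ := hr
  cases p with
  | nil => exact (G.irrefl hwv).elim
  | cons h _ => exact hw.unique (hHG h) hwv ▸ h

theorem IsMIS.mem_of_pendant (hM : IsMIS G M) (hw : Pendant G w) (hwv : G.Adj w v)
    (hv : v ∉ M) : w ∈ M := by
  by_contra hwM
  obtain ⟨m, hm, hwm⟩ := (isMIS_iff.mp hM).2 w hwM
  exact hv (hw.unique hwm hwv ▸ hm)

theorem onCycle_of_adj_of_not_adj (hHG : H ≤ G) (hH : H.Preconnected) (hvu : G.Adj v u)
    (hHvu : ¬ H.Adj v u) : OnCycle G v := by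
  classical
  have hH_le : H ≤ G.deleteEdges {s(v, u)} :=
    (deleteEdges_eq_self.mpr (Set.disjoint_singleton_right.mpr hHvu)).ge.trans
      (deleteEdges_mono hHG)
  obtain ⟨_, c, hc, he⟩ :=
    adj_and_reachable_delete_edges_iff_exists_cycle.mp ⟨hvu, (hH v u).mono hH_le⟩
  have hv := c.fst_mem_support_of_mem_edges he
  exact ⟨c.rotate v hv, hc.rotate hv⟩

theorem stmt_4_general (G : SimpleGraph V) (hS : Sputnik G)
    (M : Set V) (hM : IsMIS G M) : RobustMIS G M := by
  intro H hHG hH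
  obtain ⟨hMind, hMdom⟩ := isMIS_iff.mp hM
  refine isMIS_iff.mpr ⟨hMind.mono hHG, fun v hv => ?_⟩
  obtain ⟨u, huM, hvu⟩ := hMdom v hv
  by_cases hHvu : H.Adj v u
  · exact ⟨u, huM, hHvu⟩
  obtain ⟨w, hvw, hw⟩ := hS v (onCycle_of_adj_of_not_adj hHG hH.preconnected hvu hHvu)
  exact ⟨w, hM.mem_of_pendant hw hvw.symm hv, (hw.adj_of_reachable hvw.symm hHG (hH w v)).symm⟩

theorem stmt_4 (G : SimpleGraph V) (hconn : G.Connected) (hS : Sputnik G)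
    (M : Set V) (hM : IsMIS G M) : RobustMIS G M :=
  stmt_4_general G hS M hM
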